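/- Let V ⊆ ℝ^n be a nonempty open subset, k ≥ 1, and let Λ^k denote the alternating k-multilinear real forms on ℝ^n (with Λ^0 = ℝ). For a map ω : V × V → Λ^k define F_k ω : V^{k+2} → ℝ by (F_k ω)(v, q_1, …, q_k, w) = (ω(v,w))(q_1 − v, …, q_k − v), and define the Koszul differential d^K_k by ((d^K_k ω)(v,w))(x_1, …, x_{k−1}) = (ω(v,w))(v − w, x_1, …, x_{k−1}). Then F is a chain map from the Koszul to the bar complex: d^X_k (F_k ω) = F_{k−1}(d^K_k ω), where (d^X_k χ)(v, q_1, …, q_{k−1}, w) = χ(v, v, q_1, …, q_{k−1}, w) + Σ_{i=1}^{k−1} (−1)^i χ(v, q_1, …, q_i, q_i, …, q_{k−1}, w) + (−1)^k χ(v, q_1, …, q_{k−1}, w, w) (for k = 1 one sets F_0 ω = ω as a function on V × V). -/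

import Mathlib

/-!
In the bar differential of `F ω` every term that doubles a point other than the last one
vanishes because `ω(v, w)` is alternating: doubling `v` makes the first argument `q₁ − v`
zero, doubling `qᵢ` repeats an argument. The surviving term is
`±ω(v, w)(q₁ − v, …, q_k − v, w − v)`; rotating `w − v` to the front costs `(−1)^k`, and
`w − v = −(v − w)` supplies the remaining sign.
-/

namespace Stmt18

/-- The bar differential `d^X_m` (functions with `m+2` slots to functions with `m+1`
slots): `(d^X χ)(x_0,…,x_m) = ∑_{i=0}^{m} (−1)^i χ(x_0,…,x_i,x_i,…,x_m)`. -/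
def barD (n m : ℕ) (χ : (Fin (m+2) → (Fin n → ℝ)) → ℝ) :
    (Fin (m+1) → (Fin n → ℝ)) → ℝ :=
  fun x => ∑ i : Fin (m+1), ((-1 : ℤ) ^ (i : ℕ)) • χ (fun j =>
    if _h : (j : ℕ) ≤ (i : ℕ) then x ⟨(j : ℕ), by have := i.isLt; omega⟩
    else x ⟨(j : ℕ) - 1, by have := j.isLt; omega⟩)

/-- The chain map `F_k` from the Koszul to the bar complex:
`(F_k ω)(v, q_1, …, q_k, w) = (ω(v,w))(q_1 − v, …, q_k − v)`, written for an arbitrary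
family of `k`-argument forms `ω`. -/
def Fmap (n k : ℕ)
    (ω : (Fin n → ℝ) → (Fin n → ℝ) → ((Fin k → (Fin n → ℝ)) → ℝ)) :
    (Fin (k+2) → (Fin n → ℝ)) → ℝ :=
  fun x => ω (x 0) (x (Fin.last (k+1)))
    (fun l => x ⟨(l : ℕ) + 1, by have := l.isLt; omega⟩ - x 0)

section AlternatingSigns

variable {R M N : Type*} [Semiring R] [AddCommGroup M] [Module R M] [AddCommGroup N]
  [Module R N] {k : ℕ} (f : M [⋀^Fin (k + 1)]→ₗ[R] N)

theorem _root_.AlternatingMap.map_snoc (v : Fin k → M) (a : M) :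
    f (Fin.snoc v a) = (-1 : ℤ) ^ k • f (Fin.cons a v) := by
  rw [Fin.snoc_eq_cons_rotate, ← Function.comp_def, f.map_perm, sign_finRotate]
  simp [Units.smul_def]

theorem _root_.AlternatingMap.map_cons_neg_last_init (g : Fin (k + 1) → M) :
    f (Fin.cons (-g (Fin.last k)) (Fin.init g)) = (-1 : ℤ) ^ (k + 1) • f g := by
  classical
  rw [← Fin.update_cons_zero (g (Fin.last k)), f.map_update_neg, Fin.update_cons_zero]
  conv_rhs => rw [← Fin.snoc_init_self g, f.map_snoc, smul_smul, ← pow_add,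
    Odd.neg_one_pow ⟨k, by ring⟩, neg_one_smul]

end AlternatingSigns

theorem barD_eq_of_vanishing {n m : ℕ} {χ : (Fin (m + 2) → (Fin n → ℝ)) → ℝ}
    (hχ : ∀ y (i : Fin (m + 1)), i ≠ Fin.last m → y i.castSucc = y i.succ → χ y = 0)
    (x : Fin (m + 1) → (Fin n → ℝ)) :
    barD n m χ x = (-1 : ℤ) ^ m • χ (Fin.snoc x (x (Fin.last m))) := by
  rw [barD, Fintype.sum_eq_single (Fin.last m)]
  · congr 2
    ext j : 1
    refine Fin.lastCases ?_ (fun j => ?_) j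
    · simp only [Fin.val_last, Fin.snoc_last, dif_neg (Nat.not_succ_le_self m)]
      rfl
    · simp [Fin.snoc_castSucc, Fin.is_le]
  · intro i hi
    rw [hχ _ i hi (by simp), smul_zero]

theorem Fmap_eq_zero_of_adjacent_eq {n k : ℕ}
    (ω : (Fin n → ℝ) → (Fin n → ℝ) → (Fin n → ℝ) [⋀^Fin (k + 1)]→ₗ[ℝ] ℝ)
    {y : Fin (k + 3) → (Fin n → ℝ)} {i : Fin (k + 2)} (hi : i ≠ Fin.last (k + 1))
    (hy : y i.castSucc = y i.succ) : Fmap n (k + 1) (fun v w => ω v w) y = 0 := by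
  induction i using Fin.cases with
  | zero => exact (ω _ _).map_coord_zero 0 (sub_eq_zero.mpr hy.symm)
  | succ j =>
    induction j using Fin.lastCases with
    | last => exact absurd rfl hi
    | cast j =>
      exact (ω _ _).map_eq_zero_of_eq _ (i := j.castSucc) (j := j.succ)
        (congrArg (· - y 0) hy) Fin.castSucc_lt_succ.ne

theorem Fmap_snoc {n k : ℕ}
    (ω : (Fin n → ℝ) → (Fin n → ℝ) → ((Fin (k + 1) → (Fin n → ℝ)) → ℝ))
    (x : Fin (k + 2) → (Fin n → ℝ)) (a : Fin n → ℝ) :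
    Fmap n (k + 1) ω (Fin.snoc x a) = ω (x 0) a (fun l => x l.succ - x 0) := by
  have h : ∀ i : Fin (k + 2), (Fin.snoc x a : Fin (k + 3) → _) ⟨i, by omega⟩ = x i :=
    fun i => Fin.snoc_castSucc (α := fun _ => Fin n → ℝ) ..
  have h0 : (Fin.snoc x a : Fin (k + 3) → _) 0 = x 0 := h 0
  simp only [Fmap, Fin.snoc_last, h0]
  exact congrArg _ (funext fun l => congrArg (· - x 0) (h l.succ))

theorem F_chain_map (n k : ℕ) (V : Set (Fin n → ℝ))
    (ω : (Fin n → ℝ) → (Fin n → ℝ) → (AlternatingMap ℝ (Fin n → ℝ) ℝ (Fin (k+1)))) :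
    ∀ x : Fin (k+2) → (Fin n → ℝ), (∀ i, x i ∈ V) →
      barD n (k+1) (Fmap n (k+1) (fun v w => ⇑(ω v w))) x
        = Fmap n k (fun v w y => ω v w (Fin.cons (v - w) y)) x := by
  intro x _
  rw [barD_eq_of_vanishing (fun _ _ hi hy => Fmap_eq_zero_of_adjacent_eq ω hi hy), Fmap_snoc,
    ← (ω _ _).map_cons_neg_last_init, neg_sub]
  rfl

end Stmt18
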